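/- arXiv:2603.20845 — 2 statements merged into one kernel-verified Lean document; each statement's English description precedes it below -/
import Mathlib

section
/- Conservativity of InqBQ over classical first-order logic: for every set Γ of classical formulas and every classical formula α, Γ ⊨ α in InqBQ if and only if Γ ⊨ α in classical first-order logic (Tarskian entailment over structures interpreting the signature, where InqBQ models interpret = via a congruence). -/
namespace InqBQ

/-- A signature: predicate symbols and function symbols, each with an arity. -/
structure Sig where
  Pred : Type
  parity : Pred → ℕ
  Func : Type
  farity : Func → ℕ

/-- Terms over a signature, with variables indexed by `ℕ`. -/
inductive Term (σ : Sig) : Type where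
  | var : ℕ → Term σ
  | func : (f : σ.Func) → (Fin (σ.farity f) → Term σ) → Term σ

/-- Formulas of InqBQ. -/
inductive Formula (σ : Sig) : Type where
  | pred : (P : σ.Pred) → (Fin (σ.parity P) → Term σ) → Formula σ
  | eq : Term σ → Term σ → Formula σ
  | falsum : Formula σ
  | conj : Formula σ → Formula σ → Formula σ
  | idisj : Formula σ → Formula σ → Formula σ
  | impl : Formula σ → Formula σ → Formula σ
  | all : ℕ → Formula σ → Formula σ
  | iex : ℕ → Formula σ → Formula σ

variable {σ : Sig}

/-- ¬φ := φ → ⊥ -/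
def Formula.neg (φ : Formula σ) : Formula σ := .impl φ .falsum

/-- ?φ := φ ⩒ ¬φ -/
def Formula.qm (φ : Formula σ) : Formula σ := .idisj φ φ.neg

/-- ⊤ := ¬⊥ -/
def Formula.verum : Formula σ := Formula.neg .falsum

/-- Classical formulas: no inquisitive disjunction, no inquisitive existential. -/
def Formula.IsClassical : Formula σ → Prop
  | .pred _ _ => True
  | .eq _ _ => True
  | .falsum => True
  | .conj φ ψ => φ.IsClassical ∧ ψ.IsClassical
  | .idisj _ _ => False
  | .impl φ ψ => φ.IsClassical ∧ ψ.IsClassical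
  | .all _ φ => φ.IsClassical
  | .iex _ _ => False

/-- The variable `n` occurs in a term. -/
def Term.VarOccurs : Term σ → ℕ → Prop
  | .var m, n => m = n
  | .func _ ts, n => ∃ i, (ts i).VarOccurs n

/-- The variable `n` occurs free in a formula. -/
def Formula.FreeVar : Formula σ → ℕ → Prop
  | .pred _ ts, n => ∃ i, (ts i).VarOccurs n
  | .eq t t', n => t.VarOccurs n ∨ t'.VarOccurs n
  | .falsum, _ => False
  | .conj φ ψ, n => φ.FreeVar n ∨ ψ.FreeVar n
  | .idisj φ ψ, n => φ.FreeVar n ∨ ψ.FreeVar n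
  | .impl φ ψ, n => φ.FreeVar n ∨ ψ.FreeVar n
  | .all x φ, n => n ≠ x ∧ φ.FreeVar n
  | .iex x φ, n => n ≠ x ∧ φ.FreeVar n

/-- A sentence is a formula with no free variables. -/
def Formula.IsSentence (φ : Formula σ) : Prop := ∀ n, ¬ φ.FreeVar n

/-- A first-order information model `M = (W, D, I, ∼)`. -/
structure Model (σ : Sig) where
  W : Type
  D : Type
  wNonempty : Nonempty W
  dNonempty : Nonempty D
  predI : W → (P : σ.Pred) → (Fin (σ.parity P) → D) → Prop
  funcI : W → (f : σ.Func) → (Fin (σ.farity f) → D) → D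
  eqI : W → D → D → Prop
  eqEquiv : ∀ w, Equivalence (eqI w)
  predCongr : ∀ w P (as bs : Fin (σ.parity P) → D),
      (∀ i, eqI w (as i) (bs i)) → (predI w P as ↔ predI w P bs)
  funcCongr : ∀ w f (as bs : Fin (σ.farity f) → D),
      (∀ i, eqI w (as i) (bs i)) → eqI w (funcI w f as) (funcI w f bs)

/-- Denotation `[t]^g_w` of a term at a world under an assignment. -/
def Term.val (M : Model σ) (w : M.W) (g : ℕ → M.D) : Term σ → M.D
  | .var n => g n
  | .func f ts => M.funcI w f (fun i => (ts i).val M w g)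

/-- The support relation `M, s ⊨_g φ`. -/
def Support (M : Model σ) : Set M.W → (ℕ → M.D) → Formula σ → Prop
  | s, g, .pred P ts => ∀ w ∈ s, M.predI w P (fun i => (ts i).val M w g)
  | s, g, .eq t t' => ∀ w ∈ s, M.eqI w (t.val M w g) (t'.val M w g)
  | s, _, .falsum => s = ∅
  | s, g, .conj φ ψ => Support M s g φ ∧ Support M s g ψ
  | s, g, .idisj φ ψ => Support M s g φ ∨ Support M s g ψ
  | s, g, .impl φ ψ => ∀ t : Set M.W, t ⊆ s → Support M t g φ → Support M t g ψ
  | s, g, .all x φ => ∀ d : M.D, Support M s (Function.update g x d) φ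
  | s, g, .iex x φ => ∃ d : M.D, Support M s (Function.update g x d) φ

/-- Id-models: `=` is interpreted as identity on the domain at each world. -/
def Model.IsId (M : Model σ) : Prop := ∀ w (d d' : M.D), M.eqI w d d' ↔ d = d'

/-- Entailment in InqBQ. -/
def Entails (Φ : Set (Formula σ)) (ψ : Formula σ) : Prop :=
  ∀ (M : Model σ) (s : Set M.W) (g : ℕ → M.D),
    (∀ φ ∈ Φ, Support M s g φ) → Support M s g ψ

/-- Entailment restricted to id-models. -/
def EntailsId (Φ : Set (Formula σ)) (ψ : Formula σ) : Prop :=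
  ∀ (M : Model σ), M.IsId → ∀ (s : Set M.W) (g : ℕ → M.D),
    (∀ φ ∈ Φ, Support M s g φ) → Support M s g ψ

/-- Validity in InqBQ. -/
def Valid (ψ : Formula σ) : Prop :=
  ∀ (M : Model σ) (s : Set M.W) (g : ℕ → M.D), Support M s g ψ

/-- Validity over id-models. -/
def IdValid (ψ : Formula σ) : Prop :=
  ∀ (M : Model σ), M.IsId → ∀ (s : Set M.W) (g : ℕ → M.D), Support M s g ψ

/-- Equivalence of formulas. -/
def FmEquiv (φ ψ : Formula σ) : Prop :=
  ∀ (M : Model σ) (s : Set M.W) (g : ℕ → M.D), Support M s g φ ↔ Support M s g ψ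

/-- A formula is truth-conditional if support at a state reduces to truth at each world. -/
def TruthConditional (φ : Formula σ) : Prop :=
  ∀ (M : Model σ) (s : Set M.W) (g : ℕ → M.D),
    Support M s g φ ↔ ∀ w ∈ s, Support M {w} g φ

/-- A standard (Tarskian) relational structure for the signature. -/
structure Struc (σ : Sig) where
  D : Type
  dNonempty : Nonempty D
  predI : (P : σ.Pred) → (Fin (σ.parity P) → D) → Prop
  funcI : (f : σ.Func) → (Fin (σ.farity f) → D) → D

/-- Tarskian term denotation. -/
def Term.tval (A : Struc σ) (g : ℕ → A.D) : Term σ → A.D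
  | .var n => g n
  | .func f ts => A.funcI f (fun i => (ts i).tval A g)

/-- Standard Tarskian satisfaction (reading `→` as material implication, `=` as identity). -/
def TSat (A : Struc σ) : (ℕ → A.D) → Formula σ → Prop
  | g, .pred P ts => A.predI P (fun i => (ts i).tval A g)
  | g, .eq t t' => t.tval A g = t'.tval A g
  | _, .falsum => False
  | g, .conj φ ψ => TSat A g φ ∧ TSat A g ψ
  | g, .idisj φ ψ => TSat A g φ ∨ TSat A g ψ
  | g, .impl φ ψ => TSat A g φ → TSat A g ψ
  | g, .all x φ => ∀ d : A.D, TSat A (Function.update g x d) φ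
  | g, .iex x φ => ∃ d : A.D, TSat A (Function.update g x d) φ

/-- Classical first-order (Tarskian) entailment. -/
def FOLEntails (Γ : Set (Formula σ)) (α : Formula σ) : Prop :=
  ∀ (A : Struc σ) (g : ℕ → A.D), (∀ γ ∈ Γ, TSat A g γ) → TSat A g α

/-- The setoid on the domain given by `∼_w`. -/
def Model.setoidAt (M : Model σ) (w : M.W) : Setoid M.D := ⟨M.eqI w, M.eqEquiv w⟩

/-- The quotient relational structure `𝓜_w = (D/∼_w, I_w^∼)` induced at world `w`. -/
noncomputable def Model.quotStruc (M : Model σ) (w : M.W) : Struc σ where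
  D := Quotient (M.setoidAt w)
  dNonempty := Nonempty.map (Quotient.mk (M.setoidAt w)) M.dNonempty
  predI P as := ∃ bs : Fin (σ.parity P) → M.D,
    (∀ i, Quotient.mk (M.setoidAt w) (bs i) = as i) ∧ M.predI w P bs
  funcI f as := Quotient.mk (M.setoidAt w) (M.funcI w f (fun i => (as i).out))

/-- λt := ∃̷x (x = t). -/
def lam (x : ℕ) (t : Term σ) : Formula σ := .iex x (.eq (.var x) t)

/-- Conjunction of a finite list of formulas. -/
def conjList (l : List (Formula σ)) : Formula σ := l.foldr .conj Formula.verum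

/-- x ≠ t. -/
def neTm (x : ℕ) (t : Term σ) : Formula σ := (Formula.eq (.var x) t).neg

/-- ∃̷x (x ≠ t). -/
def iexNe (t : Term σ) : Formula σ := .iex 0 (neTm 0 t)

/-- η := (=(a;b) ∧ =(b;a) ∧ ∃̷x(x≠b)) → ∃̷x(x≠a). -/
def etaOf (a b : Term σ) : Formula σ :=
  .impl (.conj (.impl (lam 0 a) (lam 0 b))
          (.conj (.impl (lam 0 b) (lam 0 a)) (iexNe b)))
    (iexNe a)

/-- θ := ∃̷x ∃̷y ¬(x = a ∧ y = b). -/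
def thetaOf (a b : Term σ) : Formula σ :=
  .iex 0 (.iex 1 (Formula.neg (.conj (.eq (.var 0) a) (.eq (.var 1) b))))

/-- ρ := ∀x∀y ?(x = y). -/
def rho : Formula σ := .all 0 (.all 1 (Formula.qm (.eq (.var 0) (.var 1))))

/-- The signature with exactly two constant symbols `a`, `b` (and no predicates). -/
def sigAB : Sig where
  Pred := Empty
  parity := fun P => P.elim
  Func := Bool
  farity := fun _ => 0

/-- The constant `a`. -/
def tA : Term sigAB := .func false Fin.elim0

/-- The constant `b`. -/
def tB : Term sigAB := .func true Fin.elim0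

def etaAB : Formula sigAB := etaOf tA tB

def thetaAB : Formula sigAB := thetaOf tA tB

/-- `a_w`. -/
def aVal (M : Model sigAB) (w : M.W) : M.D := M.funcI w false Fin.elim0

/-- `b_w`. -/
def bVal (M : Model sigAB) (w : M.W) : M.D := M.funcI w true Fin.elim0

/-- `R_s = {(a_w, b_w) | w ∈ s}`. -/
def RelOf (M : Model sigAB) (s : Set M.W) : Set (M.D × M.D) :=
  {p | ∃ w ∈ s, p = (aVal M w, bVal M w)}

/-- An id-model (for the signature with the two constants a, b) is full if `R_W = D × D`. -/
def Model.IsFull (M : Model sigAB) : Prop := RelOf M Set.univ = Set.univ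

/-- Classical existential quantifier ∃xφ := ¬∀x¬φ. -/
def cExists (x : ℕ) (φ : Formula σ) : Formula σ := (Formula.all x φ.neg).neg

/-- ⋀_{i<j<n} (xᵢ ≠ xⱼ). -/
def distinctFm (n : ℕ) : Formula sigAB :=
  conjList ((List.range n).flatMap fun i => (List.range n).filterMap fun j =>
    if i < j then some ((Formula.eq (.var i) (.var j)).neg) else none)

/-- χₙ := ∃x₁…∃xₙ ⋀_{i<j} (xᵢ ≠ xⱼ), expressing that there are at least n elements. -/
def chi (n : ℕ) : Formula sigAB := (List.range n).foldr cExists (distinctFm n)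

/-- The canonical full id-model over a nonempty domain `D`: worlds are pairs `(d, e)`,
with `a_{(d,e)} = d` and `b_{(d,e)} = e`. -/
def canonModel (D : Type) (hD : Nonempty D) : Model sigAB where
  W := D × D
  D := D
  wNonempty := Nonempty.map (fun d => (d, d)) hD
  dNonempty := hD
  predI := fun _ P => P.elim
  funcI := fun w f _ => cond f w.2 w.1
  eqI := fun _ => Eq
  eqEquiv := fun _ => eq_equivalence
  predCongr := fun _ P => P.elim
  funcCongr := fun _ _ _ _ _ => rfl

/-- Extending a signature with two fresh constant symbols `a`, `b`. -/
def sigExt (σ : Sig) : Sig where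
  Pred := σ.Pred
  parity := σ.parity
  Func := σ.Func ⊕ Bool
  farity := Sum.elim σ.farity (fun _ => 0)

/-- Lift of a term to the extended signature. -/
def Term.lift : Term σ → Term (sigExt σ)
  | .var n => .var n
  | .func f ts => .func (Sum.inl f) (fun i => (ts i).lift)

/-- Lift of a formula to the extended signature. -/
def Formula.lift : Formula σ → Formula (sigExt σ)
  | .pred P ts => .pred P (fun i => (ts i).lift)
  | .eq t t' => .eq t.lift t'.lift
  | .falsum => .falsum
  | .conj φ ψ => .conj φ.lift ψ.lift
  | .idisj φ ψ => .idisj φ.lift ψ.lift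
  | .impl φ ψ => .impl φ.lift ψ.lift
  | .all x φ => .all x φ.lift
  | .iex x φ => .iex x φ.lift

/-- The fresh constant `a` of the extended signature. -/
def extA : Term (sigExt σ) := .func (Sum.inr false) Fin.elim0

/-- The fresh constant `b` of the extended signature. -/
def extB : Term (sigExt σ) := .func (Sum.inr true) Fin.elim0

/-- The canonical full id-model based on a relational structure `𝓜`: worlds are pairs
`(d, e)`; `a_{(d,e)} = d`, `b_{(d,e)} = e`, and all symbols of `σ` are interpreted
rigidly as in `𝓜`. -/
def canonModelOf (A : Struc σ) : Model (sigExt σ) where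
  W := A.D × A.D
  D := A.D
  wNonempty := Nonempty.map (fun d => (d, d)) A.dNonempty
  dNonempty := A.dNonempty
  predI := fun _ P => A.predI P
  funcI := fun w f => match f with
    | .inl f₀ => fun as => A.funcI f₀ as
    | .inr b => fun _ => cond b w.2 w.1
  eqI := fun _ => Eq
  eqEquiv := fun _ => eq_equivalence
  predCongr := fun _ P as bs h => by
    have hab : as = bs := funext fun i => h i
    rw [hab]
  funcCongr := fun w f as bs h => by
    have hab : as = bs := funext fun i => h i
    rw [hab]

/-- Every formula is supported at the empty state. -/
lemma empty_support (M : Model σ) (g : ℕ → M.D) (φ : Formula σ) : Support M ∅ g φ := by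
  induction φ generalizing g with
  | pred P ts => intro w hw; exact absurd hw (Set.notMem_empty w)
  | eq t t' => intro w hw; exact absurd hw (Set.notMem_empty w)
  | falsum => rfl
  | conj φ ψ ihφ ihψ => exact ⟨ihφ g, ihψ g⟩
  | idisj φ ψ ihφ ihψ => exact Or.inl (ihφ g)
  | impl φ ψ ihφ ihψ =>
      intro t ht _
      rw [Set.subset_empty_iff] at ht; subst ht; exact ihψ g
  | all x φ ih => intro d; exact ih _
  | iex x φ ih => obtain ⟨d⟩ := M.dNonempty; exact ⟨d, ih _⟩

/-- Classical formulas are truth-conditional. -/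
lemma classical_truthcond (M : Model σ) (φ : Formula σ) (hc : φ.IsClassical) :
    ∀ (s : Set M.W) (g : ℕ → M.D),
      Support M s g φ ↔ ∀ w ∈ s, Support M {w} g φ := by
  induction φ with
  | pred P ts =>
      intro s g
      constructor
      · intro h w hw w' hw'; rw [Set.mem_singleton_iff] at hw'; subst hw'; exact h _ hw
      · intro h w hw; exact h w hw w rfl
  | eq t t' =>
      intro s g
      constructor
      · intro h w hw w' hw'; rw [Set.mem_singleton_iff] at hw'; subst hw'; exact h _ hw
      · intro h w hw; exact h w hw w rfl
  | falsum =>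
      intro s g
      show s = ∅ ↔ ∀ w ∈ s, ({w} : Set M.W) = ∅
      constructor
      · intro h w hw; subst h; exact absurd hw (Set.notMem_empty w)
      · intro h
        ext w; simp only [Set.mem_empty_iff_false, iff_false]
        intro hw; exact Set.singleton_ne_empty w (h w hw)
  | conj φ ψ ihφ ihψ =>
      intro s g
      obtain ⟨h1, h2⟩ := hc
      constructor
      · rintro ⟨hφ, hψ⟩ w hw
        exact ⟨((ihφ h1 s g).mp hφ) w hw, ((ihψ h2 s g).mp hψ) w hw⟩
      · intro h
        exact ⟨(ihφ h1 s g).mpr fun w hw => (h w hw).1,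
               (ihψ h2 s g).mpr fun w hw => (h w hw).2⟩
  | idisj φ ψ ihφ ihψ => exact absurd hc not_false
  | impl φ ψ ihφ ihψ =>
      intro s g
      obtain ⟨h1, h2⟩ := hc
      constructor
      · intro h w hw t ht hφ
        exact h t (ht.trans (Set.singleton_subset_iff.mpr hw)) hφ
      · intro h t ht hφ
        refine (ihψ h2 t g).mpr fun w hw => ?_
        refine h w (ht hw) {w} (subset_refl _) ?_
        exact ((ihφ h1 t g).mp hφ) w hw
  | all x φ ih =>
      intro s g
      constructor
      · intro h w hw d
        exact ((ih hc s (Function.update g x d)).mp (h d)) w hw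
      · intro h d
        exact (ih hc s (Function.update g x d)).mpr fun w hw => h w hw d
  | iex x φ ih => exact absurd hc not_false

/-- Term denotation in the quotient structure. -/
lemma tval_quot (M : Model σ) (w : M.W) (g : ℕ → M.D) (t : Term σ) :
    t.tval (M.quotStruc w) (fun n => Quotient.mk (M.setoidAt w) (g n))
      = Quotient.mk (M.setoidAt w) (t.val M w g) := by
  induction t with
  | var n => rfl
  | func f ts ih =>
      show Quotient.mk (M.setoidAt w)
          (M.funcI w f (fun i => ((ts i).tval (M.quotStruc w) _).out)) = _
      refine Quotient.sound (M.funcCongr w f _ _ fun i => ?_)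
      rw [ih i]
      exact @Quotient.mk_out _ (M.setoidAt w) ((ts i).val M w g)

lemma update_quot (M : Model σ) (w : M.W) (g : ℕ → M.D) (x : ℕ) (d : M.D) :
    (fun n => Quotient.mk (M.setoidAt w) (Function.update g x d n))
      = Function.update (fun n => Quotient.mk (M.setoidAt w) (g n)) x
          (Quotient.mk (M.setoidAt w) d) := by
  funext n
  by_cases h : n = x
  · subst h; simp
  · simp [Function.update, h]

/-- Singleton support of a classical formula matches Tarskian truth in the
quotient structure. -/
lemma singleton_support_iff_tsat (M : Model σ) (w : M.W) (φ : Formula σ)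
    (hc : φ.IsClassical) : ∀ (g : ℕ → M.D),
    Support M {w} g φ ↔
      TSat (M.quotStruc w) (fun n => Quotient.mk (M.setoidAt w) (g n)) φ := by
  induction φ with
  | pred P ts =>
      intro g
      show (∀ w' ∈ ({w} : Set M.W), _) ↔ (M.quotStruc w).predI P _
      constructor
      · intro h
        refine ⟨fun i => (ts i).val M w g, fun i => (tval_quot M w g (ts i)).symm, h w rfl⟩
      · rintro ⟨bs, hbs, hP⟩ w' hw'
        rw [Set.mem_singleton_iff] at hw'
        rw [hw']
        refine (M.predCongr w P bs _ fun i => ?_).mp hP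
        exact Quotient.exact ((hbs i).trans (tval_quot M w g (ts i)))
  | eq t t' =>
      intro g
      show (∀ w' ∈ ({w} : Set M.W), _) ↔ _
      constructor
      · intro h
        show _ = _
        rw [tval_quot, tval_quot]
        exact Quotient.sound (h w rfl)
      · intro h w' hw'
        rw [Set.mem_singleton_iff] at hw'
        rw [hw']
        have h' : (Quotient.mk (M.setoidAt w) (t.val M w g))
            = Quotient.mk (M.setoidAt w) (t'.val M w g) := by
          rw [← tval_quot M w g t, ← tval_quot M w g t']; exact h
        exact Quotient.exact h'
  | falsum =>
      intro g
      show ({w} : Set M.W) = ∅ ↔ False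
      simp
  | conj φ ψ ihφ ihψ =>
      intro g
      obtain ⟨h1, h2⟩ := hc
      exact and_congr (ihφ h1 g) (ihψ h2 g)
  | idisj φ ψ ihφ ihψ => exact absurd hc not_false
  | impl φ ψ ihφ ihψ =>
      intro g
      obtain ⟨h1, h2⟩ := hc
      constructor
      · intro h hφ
        exact (ihψ h2 g).mp (h {w} (subset_refl _) ((ihφ h1 g).mpr hφ))
      · intro h t ht hφ
        rcases Set.subset_singleton_iff_eq.mp ht with rfl | rfl
        · exact empty_support M g ψ
        · exact (ihψ h2 g).mpr (h ((ihφ h1 g).mp hφ))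
  | all x φ ih =>
      intro g
      constructor
      · intro h q
        have := (ih hc (Function.update g x q.out)).mp (h q.out)
        rw [update_quot] at this
        have hq : Quotient.mk (M.setoidAt w) (Quotient.out (s := M.setoidAt w) q) = q :=
          Quotient.out_eq q
        exact cast (congrArg (fun v => TSat (M.quotStruc w)
          (Function.update (fun n => Quotient.mk (M.setoidAt w) (g n)) x v) φ) hq) this
      · intro h d
        have := h (Quotient.mk (M.setoidAt w) d)
        exact (ih hc (Function.update g x d)).mpr (by rw [update_quot]; exact this)
  | iex x φ ih => exact absurd hc not_false

/-- The one-world model induced by a relational structure. -/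
def strucModel (A : Struc σ) : Model σ where
  W := Unit
  D := A.D
  wNonempty := ⟨()⟩
  dNonempty := A.dNonempty
  predI := fun _ => A.predI
  funcI := fun _ => A.funcI
  eqI := fun _ => Eq
  eqEquiv := fun _ => eq_equivalence
  predCongr := fun _ P as bs h => by
    have : as = bs := funext fun i => h i
    rw [this]
  funcCongr := fun _ f as bs h => by
    have : as = bs := funext fun i => h i
    rw [this]

lemma strucModel_tval (A : Struc σ) (u : Unit) (g : ℕ → A.D) (t : Term σ) :
    t.val (strucModel A) u g = t.tval A g := by
  induction t with
  | var n => rfl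
  | func f ts ih =>
      show A.funcI f _ = A.funcI f _
      congr 1
      funext i
      exact ih i

lemma strucModel_support (A : Struc σ) (u : Unit) (φ : Formula σ)
    (hc : φ.IsClassical) : ∀ g : ℕ → A.D,
    Support (strucModel A) {u} g φ ↔ TSat A g φ := by
  induction φ with
  | pred P ts =>
      intro g
      show (∀ w' ∈ ({u} : Set Unit), _) ↔ _
      constructor
      · intro h
        show A.predI P _
        have heq : (fun i => (ts i).tval A g)
            = fun i => (ts i).val (strucModel A) u g :=
          funext fun i => (strucModel_tval A u g (ts i)).symm
        rw [heq]
        exact h u rfl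
      · intro h w' hw'
        show A.predI P fun i => Term.val (strucModel A) w' g (ts i)
        have heq : (fun i => (ts i).val (strucModel A) w' g)
            = fun i => (ts i).tval A g :=
          funext fun i => strucModel_tval A w' g (ts i)
        rw [heq]
        exact h
  | eq t t' =>
      intro g
      show (∀ w' ∈ ({u} : Set Unit), _) ↔ _
      constructor
      · intro h
        have := h u rfl
        show _ = _
        rw [← strucModel_tval A u g t, ← strucModel_tval A u g t']
        exact this
      · intro h w' hw'
        show Term.val _ _ _ _ = Term.val _ _ _ _
        rw [strucModel_tval A w' g t, strucModel_tval A w' g t']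
        exact h
  | falsum =>
      intro g
      show ({u} : Set Unit) = ∅ ↔ False
      simp
  | conj φ ψ ihφ ihψ =>
      intro g
      obtain ⟨h1, h2⟩ := hc
      exact and_congr (ihφ h1 g) (ihψ h2 g)
  | idisj φ ψ ihφ ihψ => exact absurd hc not_false
  | impl φ ψ ihφ ihψ =>
      intro g
      obtain ⟨h1, h2⟩ := hc
      constructor
      · intro h hφ
        exact (ihψ h2 g).mp (h {u} (subset_refl _) ((ihφ h1 g).mpr hφ))
      · intro h t ht hφ
        rcases Set.subset_singleton_iff_eq.mp ht with rfl | rfl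
        · exact empty_support (strucModel A) g ψ
        · exact (ihψ h2 g).mpr (h ((ihφ h1 g).mp hφ))
  | all x φ ih =>
      intro g
      exact forall_congr' fun d => ih hc (Function.update g x d)
  | iex x φ ih => exact absurd hc not_false

/-- Conservativity of InqBQ over classical first-order logic: for classical
premises and a classical conclusion, InqBQ-entailment coincides with Tarskian entailment
over relational structures (with `=` interpreted as identity). -/
theorem inqbq_conservative_over_fol (σ : Sig) (Γ : Set (Formula σ)) (α : Formula σ)
    (hΓ : ∀ γ ∈ Γ, γ.IsClassical) (hα : α.IsClassical) :
    Entails Γ α ↔ FOLEntails Γ α := by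
  constructor
  · intro h A g hg
    have hs : Support (strucModel A) {()} g α := by
      refine h (strucModel A) {()} g fun γ hγ => ?_
      exact (strucModel_support A () γ (hΓ γ hγ) g).mpr (hg γ hγ)
    exact (strucModel_support A () α hα g).mp hs
  · intro h M s g hg
    refine (classical_truthcond M α hα s g).mpr fun w hw => ?_
    refine (singleton_support_iff_tsat M w α hα g).mpr ?_
    refine h (M.quotStruc w) (fun n => Quotient.mk (M.setoidAt w) (g n)) fun γ hγ => ?_
    refine (singleton_support_iff_tsat M w γ (hΓ γ hγ) g).mp ?_
    exact (classical_truthcond M γ (hΓ γ hγ) s g).mp (hg γ hγ) w hw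

end InqBQ
end

section
/- In the signature with exactly two constant symbols a,b, for every id-model M with universe W and domain D and every state s ⊆ W: (i) M,s ⊨ =(a;b) iff the relation R_s is (the graph of) a partial function; (ii) M,s ⊨ =(b;a) iff R_s is injective (i.e., (d,e),(d',e) ∈ R_s implies d = d'); (iii) M,s ⊭ ∃̷x(x≠a) iff the domain of R_s equals D; (iv) M,s ⊨ ∃̷x(x≠b) iff the range of R_s is a proper subset of D. -/
/-!
In an id-model, `λt` is supported by a state exactly when `t` denotes one individual throughout
it, and `¬(x = t)` exactly when `t` differs from the value of `x` at each of its worlds (test on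
singleton substates). Testing the implication on two-world substates, `=(t;t')` holds in `s` iff
any two worlds of `s` that agree on `t` agree on `t'`, and `∃̷x(x ≠ t)` holds iff the values of
`t` over `s` miss some individual. With `R_s` the image of `s` under `w ↦ (a_w, b_w)`, these are
the four claims.
-/

theorem Set.subsingleton_image_iff_exists_forall_eq {α β : Type*} [Nonempty β] {f : α → β}
    {s : Set α} : (f '' s).Subsingleton ↔ ∃ b, ∀ a ∈ s, f a = b := by
  refine ⟨fun h => ?_, fun ⟨b, hb⟩ => subsingleton_of_forall_eq b (forall_mem_image.2 hb)⟩
  rcases s.eq_empty_or_nonempty with rfl | ⟨a, ha⟩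
  · exact ⟨Classical.arbitrary β, by simp⟩
  · exact ⟨f a, fun a' ha' => h (mem_image_of_mem f ha') (mem_image_of_mem f ha)⟩

theorem Set.forall_subset_subsingleton_image_imp_iff {α β γ : Type*} {f : α → β} {g : α → γ}
    {s : Set α} : (∀ u ⊆ s, (f '' u).Subsingleton → (g '' u).Subsingleton) ↔
      ∀ a ∈ s, ∀ a' ∈ s, f a = f a' → g a = g a' := by
  constructor
  · intro h a ha a' ha' hf
    have hpair : (f '' {a, a'}).Subsingleton := by
      rw [image_pair, hf, pair_eq_singleton]
      exact subsingleton_singleton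
    exact h {a, a'} (insert_subset ha (singleton_subset_iff.2 ha')) hpair
      (mem_image_of_mem g (mem_insert a _)) (mem_image_of_mem g (mem_insert_of_mem a rfl))
  · rintro h u hu hf _ ⟨a, ha, rfl⟩ _ ⟨a', ha', rfl⟩
    exact h a (hu ha) a' (hu ha') (hf (mem_image_of_mem f ha) (mem_image_of_mem f ha'))

namespace InqBQ

variable {σ : Sig}

section IdModel

variable {M : Model σ} {w : M.W} {s : Set M.W} {g : ℕ → M.D}

theorem Term.val_update_of_not_varOccurs {x : ℕ} {d : M.D} :
    ∀ {t : Term σ}, ¬ t.VarOccurs x → t.val M w (Function.update g x d) = t.val M w g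
  | .var _, h => by simpa only [Term.val] using Function.update_of_ne h d g
  | .func f ts, h => by
    simp only [Term.val]
    congr 1
    funext i
    exact val_update_of_not_varOccurs fun hi => h ⟨i, hi⟩

theorem support_eq_iff (hid : M.IsId) {t t' : Term σ} :
    Support M s g (.eq t t') ↔ ∀ w ∈ s, t.val M w g = t'.val M w g :=
  forall₂_congr fun w _ => hid w _ _

theorem support_neg_eq_iff (hid : M.IsId) {t t' : Term σ} :
    Support M s g (Formula.eq t t').neg ↔ ∀ w ∈ s, t.val M w g ≠ t'.val M w g := by
  simp only [Formula.neg, Support, hid _]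
  constructor
  · intro h w hw heq
    refine Set.singleton_ne_empty w (h {w} (Set.singleton_subset_iff.mpr hw) ?_)
    rintro u rfl
    exact heq
  · intro h u hu hsupp
    exact Set.eq_empty_of_forall_notMem fun w hw => h w (hu hw) (hsupp w hw)

theorem support_lam_iff (hid : M.IsId) {x : ℕ} {t : Term σ} (hx : ¬ t.VarOccurs x) :
    Support M s g (lam x t) ↔ ((fun w => t.val M w g) '' s).Subsingleton := by
  have := M.dNonempty
  simp only [lam, Support, hid _, Term.val, Function.update_self,
    Term.val_update_of_not_varOccurs hx, Set.subsingleton_image_iff_exists_forall_eq]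
  exact exists_congr fun d => forall₂_congr fun w _ => eq_comm

theorem support_dependence_iff (hid : M.IsId) {x : ℕ} {t t' : Term σ} (hx : ¬ t.VarOccurs x)
    (hx' : ¬ t'.VarOccurs x) :
    Support M s g (.impl (lam x t) (lam x t')) ↔
      ∀ w ∈ s, ∀ w' ∈ s, t.val M w g = t.val M w' g → t'.val M w g = t'.val M w' g := by
  simp only [Support, support_lam_iff hid hx, support_lam_iff hid hx']
  exact Set.forall_subset_subsingleton_image_imp_iff

theorem support_iexNe_iff (hid : M.IsId) {t : Term σ} (ht : ¬ t.VarOccurs 0) :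
    Support M s g (iexNe t) ↔ (fun w => t.val M w g) '' s ≠ Set.univ := by
  simp only [iexNe, neTm, Support, support_neg_eq_iff hid, Term.val, Function.update_self,
    Term.val_update_of_not_varOccurs ht, Set.ne_univ_iff_exists_notMem, Set.mem_image, not_exists,
    not_and]
  exact exists_congr fun d => forall₂_congr fun w _ => ne_comm

end IdModel

section TwoConstants

variable {M : Model sigAB} {s : Set M.W}

theorem not_varOccurs_tA (n : ℕ) : ¬ tA.VarOccurs n := fun ⟨i, _⟩ => i.elim0

theorem not_varOccurs_tB (n : ℕ) : ¬ tB.VarOccurs n := fun ⟨i, _⟩ => i.elim0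

theorem val_tA (w : M.W) (g : ℕ → M.D) : tA.val M w g = aVal M w :=
  congrArg (M.funcI w false) (funext (·.elim0))

theorem val_tB (w : M.W) (g : ℕ → M.D) : tB.val M w g = bVal M w :=
  congrArg (M.funcI w true) (funext (·.elim0))

theorem relOf_functional_iff :
    (∀ d e e' : M.D, (d, e) ∈ RelOf M s → (d, e') ∈ RelOf M s → e = e') ↔
      ∀ w ∈ s, ∀ w' ∈ s, aVal M w = aVal M w' → bVal M w = bVal M w' := by
  simp only [RelOf, Set.mem_ofPred_eq, Prod.mk.injEq]
  constructor
  · exact fun h w hw w' hw' ha => h _ _ _ ⟨w, hw, rfl, rfl⟩ ⟨w', hw', ha, rfl⟩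
  · rintro h d e e' ⟨w, hw, rfl, rfl⟩ ⟨w', hw', ha, rfl⟩
    exact h w hw w' hw' ha

theorem relOf_injective_iff :
    (∀ d d' e : M.D, (d, e) ∈ RelOf M s → (d', e) ∈ RelOf M s → d = d') ↔
      ∀ w ∈ s, ∀ w' ∈ s, bVal M w = bVal M w' → aVal M w = aVal M w' := by
  simp only [RelOf, Set.mem_ofPred_eq, Prod.mk.injEq]
  constructor
  · exact fun h w hw w' hw' hb => h _ _ _ ⟨w, hw, rfl, rfl⟩ ⟨w', hw', rfl, hb⟩
  · rintro h d d' e ⟨w, hw, rfl, rfl⟩ ⟨w', hw', rfl, hb⟩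
    exact h w hw w' hw' hb

theorem dom_relOf : {d : M.D | ∃ e, (d, e) ∈ RelOf M s} = aVal M '' s := by
  ext d
  simp [RelOf, eq_comm]

theorem ran_relOf : {e : M.D | ∃ d, (d, e) ∈ RelOf M s} = bVal M '' s := by
  ext e
  simp [RelOf, eq_comm]

end TwoConstants

/-- In the signature with exactly two constants a, b, for every id-model and
state: (i) s supports =(a;b) iff R_s is a partial function; (ii) s supports =(b;a) iff
R_s is injective; (iii) s does not support ∃̷x(x≠a) iff dom(R_s) = D; (iv) s supports
∃̷x(x≠b) iff ran(R_s) is a proper subset of D. -/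
theorem ab_formulas_semantics (M : Model sigAB) (hid : M.IsId) (s : Set M.W)
    (g : ℕ → M.D) :
    (Support M s g (.impl (lam 0 tA) (lam 0 tB)) ↔
      ∀ d e e' : M.D, (d, e) ∈ RelOf M s → (d, e') ∈ RelOf M s → e = e') ∧
    (Support M s g (.impl (lam 0 tB) (lam 0 tA)) ↔
      ∀ d d' e : M.D, (d, e) ∈ RelOf M s → (d', e) ∈ RelOf M s → d = d') ∧
    (¬ Support M s g (iexNe tA) ↔ {d : M.D | ∃ e, (d, e) ∈ RelOf M s} = Set.univ) ∧
    (Support M s g (iexNe tB) ↔ {e : M.D | ∃ d, (d, e) ∈ RelOf M s} ⊂ Set.univ) := by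
  have hA := not_varOccurs_tA 0
  have hB := not_varOccurs_tB 0
  rw [support_dependence_iff hid hA hB, support_dependence_iff hid hB hA,
    support_iexNe_iff hid hA, support_iexNe_iff hid hB, relOf_functional_iff,
    relOf_injective_iff, dom_relOf, ran_relOf, not_not, Set.ssubset_univ_iff]
  simp only [val_tA, val_tB, and_self]

end InqBQ
end
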